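/- Let BH denote the Benjamini–Hochberg procedure at level α and write ℓ̂(q) = |BH(q)| for its number of rejections. Fix i ∈ {1,…,m} and suppose q, q' ∈ [0,1]^m satisfy: q'_j ≤ q_j whenever q_j ≤ q_i, and q'_j = q_j whenever q_j > q_i (for all j). Then {q_i ≤ α·ℓ̂(q)/m} = {q_i ≤ α·ℓ̂(q')/m}, and on this event ℓ̂(q) = ℓ̂(q'). -/

import Mathlib

/-!
Lowering some of the values can only increase `ℓ̂`, so the event `{q_i ≤ α ℓ̂/m}` can only grow
when passing from `q` to `q'`. Conversely, if `q_i ≤ α ℓ̂(q')/m`, then every `j` counted at level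
`ℓ̂(q')` for `q'` is also counted for `q`: either `q_j ≤ q_i`, or `q_j` was left unchanged. Hence
`ℓ̂(q')` is admissible for `q`, which gives `ℓ̂(q') ≤ ℓ̂(q)`.
-/

noncomputable section

/-- `ℓ̂(q) = max{ℓ ∈ {0,…,m} : q_(ℓ) ≤ α·ℓ/m}`, via the counting characterization. -/
def bhNum (m : ℕ) (α : ℝ) (q : Fin m → ℝ) : ℕ :=
  sSup {ℓ : ℕ | ℓ ≤ m ∧ ℓ ≤ (Finset.univ.filter fun i => q i ≤ α * (ℓ : ℝ) / (m : ℝ)).card}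

open Finset

namespace BenjaminiHochberg

variable {m : ℕ} {α : ℝ}

theorem bhNum_spec (m : ℕ) (α : ℝ) (q : Fin m → ℝ) :
    bhNum m α q ≤ m ∧
      bhNum m α q ≤ #(univ.filter fun j => q j ≤ α * (bhNum m α q : ℝ) / m) :=
  Nat.sSup_mem (s := {ℓ : ℕ | ℓ ≤ m ∧ ℓ ≤ #(univ.filter fun j => q j ≤ α * (ℓ : ℝ) / m)})
    ⟨0, Nat.zero_le m, Nat.zero_le _⟩ ⟨m, fun _ h => h.1⟩

theorem le_bhNum {q : Fin m → ℝ} {ℓ : ℕ} (hℓm : ℓ ≤ m)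
    (hℓ : ℓ ≤ #(univ.filter fun j => q j ≤ α * (ℓ : ℝ) / m)) : ℓ ≤ bhNum m α q :=
  le_csSup ⟨m, fun _ h => h.1⟩ ⟨hℓm, hℓ⟩

theorem bhNum_antitone : Antitone (bhNum m α) := by
  intro q' q hq'q
  obtain ⟨hm, hcard⟩ := bhNum_spec m α q
  refine le_bhNum hm (hcard.trans (card_le_card fun j hj => ?_))
  simp only [mem_filter] at hj ⊢
  exact ⟨hj.1, (hq'q j).trans hj.2⟩

theorem bhNum_le_of_eq_above {q q' : Fin m → ℝ} {t : ℝ} (ht : t ≤ α * (bhNum m α q' : ℝ) / m)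
    (heq : ∀ j, t < q j → q' j = q j) : bhNum m α q' ≤ bhNum m α q := by
  obtain ⟨hm, hcard⟩ := bhNum_spec m α q'
  refine le_bhNum hm (hcard.trans (card_le_card fun j hj => ?_))
  simp only [mem_filter] at hj ⊢
  refine ⟨hj.1, ?_⟩
  rcases le_or_gt (q j) t with h | h
  · exact h.trans ht
  · exact heq j h ▸ hj.2

end BenjaminiHochberg

open BenjaminiHochberg

theorem stmt_4_general (m : ℕ) (α : ℝ) (hα : α ∈ Set.Ioo (0 : ℝ) 1)
    (q q' : Fin m → ℝ) (i : Fin m)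
    (hle : ∀ j, q j ≤ q i → q' j ≤ q j) (heq : ∀ j, q i < q j → q' j = q j) :
    ((q i ≤ α * (bhNum m α q : ℝ) / m) ↔ (q i ≤ α * (bhNum m α q' : ℝ) / m))
    ∧ (q i ≤ α * (bhNum m α q : ℝ) / m → bhNum m α q = bhNum m α q') := by
  have hq'q : q' ≤ q := fun j => (le_or_gt (q j) (q i)).elim (hle j) fun h => (heq j h).le
  have hmono : bhNum m α q ≤ bhNum m α q' := bhNum_antitone hq'q
  have hevent : q i ≤ α * (bhNum m α q : ℝ) / m → q i ≤ α * (bhNum m α q' : ℝ) / m :=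
    fun h => h.trans (by gcongr; exact hα.1.le)
  have hnum : q i ≤ α * (bhNum m α q' : ℝ) / m → bhNum m α q = bhNum m α q' :=
    fun h => hmono.antisymm (bhNum_le_of_eq_above h heq)
  exact ⟨⟨hevent, fun h => by rwa [hnum h]⟩, fun h => hnum (hevent h)⟩

/-- Lemma D.6 of Marandon et al.: if `q'` coincides with `q` above level `q_i` and is
pointwise smaller below, then `{q_i ≤ α·ℓ̂(q)/m} = {q_i ≤ α·ℓ̂(q')/m}`, and on this event
`ℓ̂(q) = ℓ̂(q')`. -/
theorem stmt_4 (m : ℕ) (hm : 0 < m) (α : ℝ) (hα : α ∈ Set.Ioo (0 : ℝ) 1)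
    (q q' : Fin m → ℝ) (hq : ∀ j, q j ∈ Set.Icc (0 : ℝ) 1)
    (hq' : ∀ j, q' j ∈ Set.Icc (0 : ℝ) 1) (i : Fin m)
    (hle : ∀ j, q j ≤ q i → q' j ≤ q j) (heq : ∀ j, q i < q j → q' j = q j) :
    ((q i ≤ α * (bhNum m α q : ℝ) / m) ↔ (q i ≤ α * (bhNum m α q' : ℝ) / m))
    ∧ (q i ≤ α * (bhNum m α q : ℝ) / m → bhNum m α q = bhNum m α q') :=
  stmt_4_general m α hα q q' i hle heq

end
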